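/- (Nonexistence in chamber V.) Suppose θ_0 > 0, θ_1 < 0 and θ_0 + 2θ_1 > 0. Then there is no Θ-stable framed representation Ṽ = (V_0, V_1, ℂ) of (Q̃,I) such that ι : ℂ → V_0 is an isomorphism and dim V_1 ≠ 1. -/

import Mathlib

open Module

variable {V₀ V₁ : Type*} [AddCommGroup V₀] [Module ℂ V₀] [AddCommGroup V₁] [Module ℂ V₁]

/-- `(W₀, W₁)` is a subrepresentation of the representation of the quiver `(Q, I)`
given by the data `(a₁, a₂, b₁, b₂, c, d)`. -/
def IsSubrep (a₁ a₂ : V₀ →ₗ[ℂ] V₁) (b₁ b₂ : V₁ →ₗ[ℂ] V₀)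
    (c : V₀ →ₗ[ℂ] V₀) (d : V₁ →ₗ[ℂ] V₁)
    (W₀ : Submodule ℂ V₀) (W₁ : Submodule ℂ V₁) : Prop :=
  (∀ x ∈ W₀, a₁ x ∈ W₁) ∧ (∀ x ∈ W₀, a₂ x ∈ W₁) ∧
    (∀ y ∈ W₁, b₁ y ∈ W₀) ∧ (∀ y ∈ W₁, b₂ y ∈ W₀) ∧
    (∀ x ∈ W₀, c x ∈ W₀) ∧ (∀ y ∈ W₁, d y ∈ W₁)

/-- The relations `a₂ bᵢ a₁ = a₁ bᵢ a₂`, `b₂ aᵢ b₁ = b₁ aᵢ b₂`, `d aᵢ = aᵢ c`,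
`c bᵢ = bᵢ d` (i = 1, 2) of the quiver `(Q, I)`. -/
def SatisfiesRelations (a₁ a₂ : V₀ →ₗ[ℂ] V₁) (b₁ b₂ : V₁ →ₗ[ℂ] V₀)
    (c : V₀ →ₗ[ℂ] V₀) (d : V₁ →ₗ[ℂ] V₁) : Prop :=
  a₂ ∘ₗ b₁ ∘ₗ a₁ = a₁ ∘ₗ b₁ ∘ₗ a₂ ∧ a₂ ∘ₗ b₂ ∘ₗ a₁ = a₁ ∘ₗ b₂ ∘ₗ a₂ ∧
    b₂ ∘ₗ a₁ ∘ₗ b₁ = b₁ ∘ₗ a₁ ∘ₗ b₂ ∧ b₂ ∘ₗ a₂ ∘ₗ b₁ = b₁ ∘ₗ a₂ ∘ₗ b₂ ∧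
    d ∘ₗ a₁ = a₁ ∘ₗ c ∧ d ∘ₗ a₂ = a₂ ∘ₗ c ∧
    c ∘ₗ b₁ = b₁ ∘ₗ d ∧ c ∘ₗ b₂ = b₂ ∘ₗ d

/-- The slope `μ_Θ` of a pair of dimensions `(n₀, n₁)` with respect to `Θ = (θ₀, θ₁)`. -/
noncomputable def slopeMu (θ₀ θ₁ : ℝ) (n₀ n₁ : ℕ) : ℝ :=
  (θ₀ * (n₀ : ℝ) + θ₁ * (n₁ : ℝ)) / ((n₀ : ℝ) + (n₁ : ℝ))

/-- `Θ`-stability of the (nonzero) representation `(V₀, V₁)`: every subrepresentation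
`(W₀, W₁)` with `0 ≠ (W₀, W₁) ⊊ (V₀, V₁)` has strictly smaller slope. -/
def IsThetaStable [FiniteDimensional ℂ V₀] [FiniteDimensional ℂ V₁]
    (θ₀ θ₁ : ℝ) (a₁ a₂ : V₀ →ₗ[ℂ] V₁) (b₁ b₂ : V₁ →ₗ[ℂ] V₀)
    (c : V₀ →ₗ[ℂ] V₀) (d : V₁ →ₗ[ℂ] V₁) : Prop :=
  ∀ W₀ : Submodule ℂ V₀, ∀ W₁ : Submodule ℂ V₁,
    IsSubrep a₁ a₂ b₁ b₂ c d W₀ W₁ →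
    ¬(W₀ = ⊥ ∧ W₁ = ⊥) → ¬(W₀ = ⊤ ∧ W₁ = ⊤) →
    slopeMu θ₀ θ₁ (finrank ℂ W₀) (finrank ℂ W₁) <
      slopeMu θ₀ θ₁ (finrank ℂ V₀) (finrank ℂ V₁)

/-- `Θ`-stability for a framed representation `(V₀, V₁, V_∞ = ℂ)` of `(Q̃, I)` with framing
map `ι : ℂ → V₀`:
(i) every framed subrepresentation `(W₀, W₁, 0)` with `(W₀, W₁) ≠ (0, 0)` satisfies
`Θ(W₀, W₁) < 0`, and
(ii) every framed subrepresentation `(W₀, W₁, ℂ)` with `(W₀, W₁) ≠ (V₀, V₁)` satisfies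
`Θ(W₀, W₁) < Θ(V₀, V₁)`. -/
def IsFramedStable [FiniteDimensional ℂ V₀] [FiniteDimensional ℂ V₁]
    (θ₀ θ₁ : ℝ) (a₁ a₂ : V₀ →ₗ[ℂ] V₁) (b₁ b₂ : V₁ →ₗ[ℂ] V₀)
    (c : V₀ →ₗ[ℂ] V₀) (d : V₁ →ₗ[ℂ] V₁) (ι : ℂ →ₗ[ℂ] V₀) : Prop :=
  (∀ W₀ : Submodule ℂ V₀, ∀ W₁ : Submodule ℂ V₁,
      IsSubrep a₁ a₂ b₁ b₂ c d W₀ W₁ → ¬(W₀ = ⊥ ∧ W₁ = ⊥) →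
      θ₀ * (finrank ℂ W₀ : ℝ) + θ₁ * (finrank ℂ W₁ : ℝ) < 0) ∧
    (∀ W₀ : Submodule ℂ V₀, ∀ W₁ : Submodule ℂ V₁,
      IsSubrep a₁ a₂ b₁ b₂ c d W₀ W₁ → LinearMap.range ι ≤ W₀ →
      ¬(W₀ = ⊤ ∧ W₁ = ⊤) →
      θ₀ * (finrank ℂ W₀ : ℝ) + θ₁ * (finrank ℂ W₁ : ℝ) <
        θ₀ * (finrank ℂ V₀ : ℝ) + θ₁ * (finrank ℂ V₁ : ℝ))

/-!
Taking `W₀ = V₀` and `W₁ = im a₁ + im a₂` gives a framed subrepresentation containing the image of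
the framing, because `d aᵢ = aᵢ c`. As `θ₁ < 0`, condition (ii) forces `W₁ = V₁`, so
`dim V₁ ≤ 2 dim V₀`. Condition (i) for the whole representation then reads
`θ₀ dim V₀ + θ₁ dim V₁ < 0`, whereas `θ₀ dim V₀ + θ₁ dim V₁ ≥ (θ₀ + 2θ₁) dim V₀ > 0`.
-/

open Module LinearMap

theorem finrank_range_sup_range_le [FiniteDimensional ℂ V₀] (a₁ a₂ : V₀ →ₗ[ℂ] V₁) :
    finrank ℂ ↥(range a₁ ⊔ range a₂) ≤ 2 * finrank ℂ V₀ := by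
  have := Submodule.finrank_add_le_finrank_add_finrank (range a₁) (range a₂)
  have := finrank_range_le a₁
  have := finrank_range_le a₂
  omega

section

variable {a₁ a₂ : V₀ →ₗ[ℂ] V₁} {b₁ b₂ : V₁ →ₗ[ℂ] V₀} {c : V₀ →ₗ[ℂ] V₀} {d : V₁ →ₗ[ℂ] V₁}

theorem isSubrep_top_top : IsSubrep a₁ a₂ b₁ b₂ c d ⊤ ⊤ :=
  ⟨fun _ _ => trivial, fun _ _ => trivial, fun _ _ => trivial,
    fun _ _ => trivial, fun _ _ => trivial, fun _ _ => trivial⟩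

theorem isSubrep_top_range_sup_range (h₁ : d ∘ₗ a₁ = a₁ ∘ₗ c) (h₂ : d ∘ₗ a₂ = a₂ ∘ₗ c) :
    IsSubrep a₁ a₂ b₁ b₂ c d ⊤ (range a₁ ⊔ range a₂) := by
  have hd : (range a₁ ⊔ range a₂).map d ≤ range a₁ ⊔ range a₂ := by
    rw [Submodule.map_sup, ← range_comp, ← range_comp, h₁, h₂]
    exact sup_le_sup (range_comp_le_range _ _) (range_comp_le_range _ _)
  exact ⟨fun x _ => Submodule.mem_sup_left (mem_range_self a₁ x),
    fun x _ => Submodule.mem_sup_right (mem_range_self a₂ x),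
    fun _ _ => trivial, fun _ _ => trivial, fun _ _ => trivial,
    fun _ hy => hd (Submodule.mem_map_of_mem hy)⟩

namespace IsFramedStable

variable [FiniteDimensional ℂ V₀] [FiniteDimensional ℂ V₁] {θ₀ θ₁ : ℝ} {ι : ℂ →ₗ[ℂ] V₀}

theorem range_sup_range_eq_top (hS : IsFramedStable θ₀ θ₁ a₁ a₂ b₁ b₂ c d ι) (hθ₁ : θ₁ < 0)
    (h₁ : d ∘ₗ a₁ = a₁ ∘ₗ c) (h₂ : d ∘ₗ a₂ = a₂ ∘ₗ c) : range a₁ ⊔ range a₂ = ⊤ := by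
  by_contra hne
  have hlt := hS.2 ⊤ _ (isSubrep_top_range_sup_range h₁ h₂) le_top (fun h => hne h.2)
  have hle : (finrank ℂ ↥(range a₁ ⊔ range a₂) : ℝ) ≤ finrank ℂ V₁ := by
    exact_mod_cast Submodule.finrank_le _
  rw [finrank_top] at hlt
  nlinarith

theorem finrank_le_two_mul (hS : IsFramedStable θ₀ θ₁ a₁ a₂ b₁ b₂ c d ι) (hθ₁ : θ₁ < 0)
    (h₁ : d ∘ₗ a₁ = a₁ ∘ₗ c) (h₂ : d ∘ₗ a₂ = a₂ ∘ₗ c) :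
    finrank ℂ V₁ ≤ 2 * finrank ℂ V₀ := by
  have h := finrank_range_sup_range_le a₁ a₂
  rwa [hS.range_sup_range_eq_top hθ₁ h₁ h₂, finrank_top] at h

theorem weight_neg [Nontrivial V₀] (hS : IsFramedStable θ₀ θ₁ a₁ a₂ b₁ b₂ c d ι) :
    θ₀ * (finrank ℂ V₀ : ℝ) + θ₁ * (finrank ℂ V₁ : ℝ) < 0 := by
  simpa using hS.1 ⊤ ⊤ isSubrep_top_top (fun h => top_ne_bot h.1)

theorem subsingleton (hS : IsFramedStable θ₀ θ₁ a₁ a₂ b₁ b₂ c d ι) (hθ₁ : θ₁ < 0)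
    (hc : 0 < θ₀ + 2 * θ₁) (h₁ : d ∘ₗ a₁ = a₁ ∘ₗ c) (h₂ : d ∘ₗ a₂ = a₂ ∘ₗ c) :
    Subsingleton V₀ := by
  by_contra hV₀
  rw [not_subsingleton_iff_nontrivial] at hV₀
  have hneg := hS.weight_neg
  have hle : (finrank ℂ V₁ : ℝ) ≤ 2 * finrank ℂ V₀ := by
    exact_mod_cast hS.finrank_le_two_mul hθ₁ h₁ h₂
  have hpos : (0 : ℝ) < finrank ℂ V₀ := by exact_mod_cast finrank_pos
  nlinarith [mul_pos hpos hc, mul_le_mul_of_nonpos_left hle hθ₁.le]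

end IsFramedStable

end

theorem nonexistence_chamber_V_general
    [FiniteDimensional ℂ V₀] [FiniteDimensional ℂ V₁]
    (θ₀ θ₁ : ℝ) (hθ₁ : θ₁ < 0) (hc : 0 < θ₀ + 2 * θ₁)
    (a₁ a₂ : V₀ →ₗ[ℂ] V₁) (b₁ b₂ : V₁ →ₗ[ℂ] V₀)
    (c : V₀ →ₗ[ℂ] V₀) (d : V₁ →ₗ[ℂ] V₁) (ι : ℂ →ₗ[ℂ] V₀)
    (hrel : SatisfiesRelations a₁ a₂ b₁ b₂ c d)
    (hι : Function.Bijective ι) :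
    ¬ IsFramedStable θ₀ θ₁ a₁ a₂ b₁ b₂ c d ι := by
  intro hS
  obtain ⟨-, -, -, -, h₁, h₂, -, -⟩ := hrel
  have : Nontrivial V₀ := hι.injective.nontrivial
  exact not_subsingleton V₀ (hS.subsingleton hθ₁ hc h₁ h₂)

/-- Nonexistence in chamber V: if `θ₀ > 0`, `θ₁ < 0`, `θ₀ + 2θ₁ > 0`,
there is no `Θ`-stable framed representation `(V₀, V₁, ℂ)` of `(Q̃, I)` with
`ι : ℂ → V₀` an isomorphism and `dim V₁ ≠ 1`. -/
theorem nonexistence_chamber_V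
    [FiniteDimensional ℂ V₀] [FiniteDimensional ℂ V₁]
    (θ₀ θ₁ : ℝ) (hθ₀ : 0 < θ₀) (hθ₁ : θ₁ < 0) (hc : 0 < θ₀ + 2 * θ₁)
    (a₁ a₂ : V₀ →ₗ[ℂ] V₁) (b₁ b₂ : V₁ →ₗ[ℂ] V₀)
    (c : V₀ →ₗ[ℂ] V₀) (d : V₁ →ₗ[ℂ] V₁) (ι : ℂ →ₗ[ℂ] V₀)
    (hrel : SatisfiesRelations a₁ a₂ b₁ b₂ c d)
    (hι : Function.Bijective ι)
    (hd1 : finrank ℂ V₁ ≠ 1) :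
    ¬ IsFramedStable θ₀ θ₁ a₁ a₂ b₁ b₂ c d ι :=
  nonexistence_chamber_V_general θ₀ θ₁ hθ₁ hc a₁ a₂ b₁ b₂ c d ι hrel hι
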